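/- Let D be a domain and f, g ∈ D nonzero. Then p_g ⊆ p_f if and only if there exists e ≥ 1 with 1/g^e ∈ (1/f)·R(D), i.e. f/g^e ∈ R(D). -/

import Mathlib

noncomputable def recip (D : Type*) [CommRing D] [IsDomain D] : Subring (FractionRing D) :=
  Subring.closure {x | ∃ d : D, d ≠ 0 ∧ x = (algebraMap D (FractionRing D) d)⁻¹}

/-- `p` is the prime ideal `p_x` of `R(D)`: the unique prime maximal with respect to
not containing `1/x`. -/
def IsPx {D : Type*} [CommRing D] [IsDomain D] (x : D) (hx : x ≠ 0)
    (p : Ideal (recip D)) : Prop :=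
  p.IsPrime ∧
  (⟨(algebraMap D (FractionRing D) x)⁻¹,
    Subring.subset_closure ⟨x, hx, rfl⟩⟩ : recip D) ∉ p ∧
  ∀ q : Ideal (recip D), q.IsPrime →
    (⟨(algebraMap D (FractionRing D) x)⁻¹,
      Subring.subset_closure ⟨x, hx, rfl⟩⟩ : recip D) ∉ q → q ≤ p

/-!
Write `u = 1/f` and `v = 1/g` in `R(D)`. A prime avoiding `v` avoids every `u ∣ vⁿ`, so it lies
in `p_f`. Conversely, an element outside `p_g` divides a power of `v`, since otherwise a prime
above it avoids `v` and so lies in `p_g`. Hence `p_g ≤ p_f` iff `u ∣ vᵉ` for some `e ≥ 1`, and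
the cofactor of such a divisibility is necessarily `f / gᵉ`.
-/

section MaximalAvoiding

variable {R : Type*} [CommRing R]

theorem exists_dvd_pow_of_notMem {p : Ideal R} {v r : R}
    (hp : ∀ q : Ideal R, q.IsPrime → v ∉ q → q ≤ p) (hr : r ∉ p) :
    ∃ n : ℕ, r ∣ v ^ n := by
  by_contra! h
  have hv : v ∉ (Ideal.span {r}).radical := by
    simpa [Ideal.mem_radical_iff, Ideal.mem_span_singleton] using h
  rw [Ideal.radical_eq_sInf, Ideal.mem_sInf] at hv
  push Not at hv
  obtain ⟨q, ⟨hrq, hq⟩, hvq⟩ := hv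
  exact hr (hp q hq hvq (hrq (Ideal.mem_span_singleton_self r)))

theorem notMem_of_dvd_pow {q : Ideal R} [q.IsPrime] {u v : R} {e : ℕ}
    (hv : v ∉ q) (huv : u ∣ v ^ e) : u ∉ q := fun hu =>
  hv (Ideal.IsPrime.mem_of_pow_mem ‹_› e (Ideal.mem_of_dvd q huv hu))

theorem le_iff_exists_dvd_pow {p q : Ideal R} {u v : R} (hu : u ∉ p)
    (hp : ∀ r : Ideal R, r.IsPrime → u ∉ r → r ≤ p)
    (hq : q.IsPrime) (hv : v ∉ q) (hq' : ∀ r : Ideal R, r.IsPrime → v ∉ r → r ≤ q) :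
    q ≤ p ↔ ∃ e : ℕ, 1 ≤ e ∧ u ∣ v ^ e := by
  constructor
  · intro hqp
    obtain ⟨n, c, hc⟩ := exists_dvd_pow_of_notMem hq' (fun h => hu (hqp h))
    exact ⟨n + 1, Nat.le_add_left 1 n, c * v, by rw [pow_succ, hc, mul_assoc]⟩
  · rintro ⟨e, -, huv⟩
    exact hp q hq (notMem_of_dvd_pow hv huv)

end MaximalAvoiding

theorem recip_inv_dvd_inv_pow_iff {D : Type*} [CommRing D] [IsDomain D]
    {f g : D} (hf : f ≠ 0) (hg : g ≠ 0) (e : ℕ) :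
    (⟨(algebraMap D (FractionRing D) f)⁻¹, Subring.subset_closure ⟨f, hf, rfl⟩⟩ : recip D) ∣
        ⟨(algebraMap D (FractionRing D) g)⁻¹, Subring.subset_closure ⟨g, hg, rfl⟩⟩ ^ e ↔
      algebraMap D (FractionRing D) f * (algebraMap D (FractionRing D) g ^ e)⁻¹ ∈ recip D := by
  have hf' : algebraMap D (FractionRing D) f ≠ 0 :=
    (map_ne_zero_iff _ (IsFractionRing.injective D _)).mpr hf
  constructor
  · rintro ⟨c, hc⟩
    have hcval := congrArg Subtype.val hc
    push_cast at hcval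
    convert c.2 using 1
    rw [← inv_pow, hcval, ← mul_assoc, mul_inv_cancel₀ hf', one_mul]
  · intro h
    refine ⟨⟨_, h⟩, Subtype.ext ?_⟩
    push_cast
    rw [inv_pow, ← mul_assoc, inv_mul_cancel₀ hf', one_mul]

theorem stmt_13 {D : Type*} [CommRing D] [IsDomain D]
    (f g : D) (hf : f ≠ 0) (hg : g ≠ 0)
    (pf pg : Ideal (recip D)) (hpf : IsPx f hf pf) (hpg : IsPx g hg pg) :
    pg ≤ pf ↔ ∃ e : ℕ, 1 ≤ e ∧
      algebraMap D (FractionRing D) f * (algebraMap D (FractionRing D) g ^ e)⁻¹ ∈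
        recip D := by
  obtain ⟨-, hfpf, hpf_max⟩ := hpf
  obtain ⟨hpg_prime, hgpg, hpg_max⟩ := hpg
  rw [le_iff_exists_dvd_pow hfpf hpf_max hpg_prime hgpg hpg_max]
  simp only [recip_inv_dvd_inv_pow_iff hf hg]
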